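/- Strict convexity of the coordinatewise SCAD_L2 penalty on ℝ^p: If a > 2, λ1 > 0 and λ2 > 1/(2(a−1)), then for every p ≥ 1 the function β ↦ Σ_{j=1}^p ( λ1·f_SCAD(|β_j|) + λ2·β_j² ) is strictly convex on ℝ^p. -/

import Mathlib

open intervalIntegral Set

/-!
The SCAD integrand is the clamp `min 1 (max ((a λ₁ - t) / ((a - 1) λ₁)) 0)`, so
`h θ = λ₁ f_SCAD θ + θ² / (2 (a - 1))` is differentiable with derivative
`min (λ₁ + θ / (a - 1)) (max (a λ₁ / (a - 1)) (θ / (a - 1)))`, which is nondecreasing, and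
nonnegative for `θ ≥ 0`. Hence `h` is convex and nondecreasing on `[0, ∞)`, so `u ↦ h |u|` is
convex; adding the strictly convex `(λ₂ - 1 / (2 (a - 1))) u²` gives the strictly convex
one-dimensional penalty, and a coordinatewise sum of strictly convex functions is strictly convex.
-/

/-- The SCAD function `f_SCAD(θ) = ∫₀^θ ( 1_{t ≤ λ1} + ((a·λ1 − t)₊/((a−1)·λ1))·1_{t > λ1} ) dt`. -/
noncomputable def fSCAD (a lam1 : ℝ) (θ : ℝ) : ℝ :=
  ∫ t in (0:ℝ)..θ,
    (if t ≤ lam1 then (1:ℝ) else 0) + (max (a * lam1 - t) 0 / ((a - 1) * lam1)) * (if lam1 < t then (1:ℝ) else 0)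

noncomputable def scadDeriv (a lam1 t : ℝ) : ℝ :=
  min 1 (max ((a * lam1 - t) / ((a - 1) * lam1)) 0)

lemma continuous_scadDeriv (a lam1 : ℝ) : Continuous (scadDeriv a lam1) := by
  unfold scadDeriv
  fun_prop

lemma scadDeriv_nonneg (a lam1 t : ℝ) : 0 ≤ scadDeriv a lam1 t :=
  le_min zero_le_one (le_max_right _ _)

section

variable {a lam1 : ℝ}

lemma fSCAD_integrand_eq_scadDeriv (ha : 1 < a) (hlam1 : 0 < lam1) (t : ℝ) :
    (if t ≤ lam1 then (1:ℝ) else 0)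
      + (max (a * lam1 - t) 0 / ((a - 1) * lam1)) * (if lam1 < t then (1:ℝ) else 0)
      = scadDeriv a lam1 t := by
  have hD : 0 < (a - 1) * lam1 := mul_pos (by linarith) hlam1
  unfold scadDeriv
  by_cases ht : t ≤ lam1
  · have : 1 ≤ (a * lam1 - t) / ((a - 1) * lam1) := by
      rw [one_le_div hD]
      linarith
    simp [ht, not_lt.mpr ht, le_max_of_le_left this]
  · have hlt : lam1 < t := not_le.mp ht
    have : max (a * lam1 - t) 0 / ((a - 1) * lam1) ≤ 1 := by
      rw [div_le_one hD]
      exact max_le (by nlinarith) hD.le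
    have hmax : max ((a * lam1 - t) / ((a - 1) * lam1)) 0
        = max (a * lam1 - t) 0 / ((a - 1) * lam1) := by
      rw [← max_div_div_right hD.le, zero_div]
    simp only [ht, hlt, if_false, if_true, zero_add, mul_one, hmax, min_eq_right this]

lemma fSCAD_eq_integral_scadDeriv (ha : 1 < a) (hlam1 : 0 < lam1) :
    fSCAD a lam1 = fun θ => ∫ t in (0:ℝ)..θ, scadDeriv a lam1 t := by
  funext θ
  exact integral_congr fun t _ => fSCAD_integrand_eq_scadDeriv ha hlam1 t

lemma hasDerivAt_fSCAD (ha : 1 < a) (hlam1 : 0 < lam1) (θ : ℝ) :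
    HasDerivAt (fSCAD a lam1) (scadDeriv a lam1 θ) θ := by
  rw [fSCAD_eq_integral_scadDeriv ha hlam1]
  exact ((continuous_scadDeriv a lam1).integral_hasStrictDerivAt 0 θ).hasDerivAt

lemma mul_scadDeriv_add_div (ha : 1 < a) (hlam1 : 0 < lam1) (t : ℝ) :
    lam1 * scadDeriv a lam1 t + t / (a - 1)
      = min (lam1 + t / (a - 1)) (max (a * lam1 / (a - 1)) (t / (a - 1))) := by
  have hplateau :
      lam1 * ((a * lam1 - t) / ((a - 1) * lam1)) + t / (a - 1) = a * lam1 / (a - 1) := by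
    have : a - 1 ≠ 0 := by linarith
    field_simp
    ring
  rw [scadDeriv, mul_min_of_nonneg _ _ hlam1.le, mul_max_of_nonneg _ _ hlam1.le,
    ← min_add_add_right, ← max_add_add_right, hplateau, mul_one, mul_zero, zero_add]

lemma monotone_mul_scadDeriv_add_div (ha : 1 < a) (hlam1 : 0 < lam1) :
    Monotone fun t => lam1 * scadDeriv a lam1 t + t / (a - 1) := by
  have hdiv : Monotone fun t : ℝ => t / (a - 1) := monotone_id.div_const (by linarith)
  simp_rw [mul_scadDeriv_add_div ha hlam1]
  exact (monotone_const.add hdiv).min (monotone_const.max hdiv)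

lemma hasDerivAt_fSCAD_add_sq (ha : 1 < a) (hlam1 : 0 < lam1) (θ : ℝ) :
    HasDerivAt (fun θ => lam1 * fSCAD a lam1 θ + θ ^ 2 / (2 * (a - 1)))
      (lam1 * scadDeriv a lam1 θ + θ / (a - 1)) θ := by
  refine (((hasDerivAt_fSCAD ha hlam1 θ).const_mul lam1).fun_add
    ((hasDerivAt_pow 2 θ).div_const (2 * (a - 1)))).congr_deriv ?_
  have : a - 1 ≠ 0 := by linarith
  field_simp
  ring

lemma convexOn_fSCAD_add_sq (ha : 1 < a) (hlam1 : 0 < lam1) :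
    ConvexOn ℝ univ fun θ => lam1 * fSCAD a lam1 θ + θ ^ 2 / (2 * (a - 1)) := by
  have hderiv := hasDerivAt_fSCAD_add_sq ha hlam1
  refine Monotone.convexOn_univ_of_deriv (fun θ => (hderiv θ).differentiableAt) ?_
  rw [funext fun θ => (hderiv θ).deriv]
  exact monotone_mul_scadDeriv_add_div ha hlam1

lemma monotoneOn_fSCAD_add_sq (ha : 1 < a) (hlam1 : 0 < lam1) :
    MonotoneOn (fun θ => lam1 * fSCAD a lam1 θ + θ ^ 2 / (2 * (a - 1))) (Ici 0) := by
  have hderiv := hasDerivAt_fSCAD_add_sq ha hlam1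
  refine monotoneOn_of_deriv_nonneg (convex_Ici 0)
    (HasDerivAt.continuousOn fun θ _ => hderiv θ)
    (fun θ _ => (hderiv θ).differentiableAt.differentiableWithinAt) fun θ hθ => ?_
  rw [interior_Ici, mem_Ioi] at hθ
  rw [(hderiv θ).deriv]
  have : 0 ≤ θ / (a - 1) := div_nonneg hθ.le (by linarith)
  have := mul_nonneg hlam1.le (scadDeriv_nonneg a lam1 θ)
  linarith

lemma convexOn_fSCAD_abs_add_sq (ha : 1 < a) (hlam1 : 0 < lam1) :
    ConvexOn ℝ univ fun u => lam1 * fSCAD a lam1 |u| + u ^ 2 / (2 * (a - 1)) := by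
  have habs : (abs : ℝ → ℝ) '' univ = Ici 0 := by
    ext x
    refine ⟨?_, fun hx => ⟨x, mem_univ x, abs_of_nonneg hx⟩⟩
    rintro ⟨u, -, rfl⟩
    exact abs_nonneg u
  have h := ConvexOn.comp (habs ▸ (convexOn_fSCAD_add_sq ha hlam1).subset (subset_univ _)
    (convex_Ici 0)) (convexOn_norm convex_univ) (habs ▸ monotoneOn_fSCAD_add_sq ha hlam1)
  simpa only [Function.comp_def, Real.norm_eq_abs, sq_abs] using h

end

lemma strictConvexOn_const_mul_sq {k : ℝ} (hk : 0 < k) :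
    StrictConvexOn ℝ univ fun u : ℝ => k * u ^ 2 := by
  refine ⟨convex_univ, fun x _ y _ hxy s t hs ht hst => ?_⟩
  have hgap : 0 < k * (s * t * (x - y) ^ 2) := by
    have := sub_ne_zero.mpr hxy
    positivity
  obtain rfl : t = 1 - s := by linarith
  simp only [smul_eq_mul]
  nlinarith

lemma strictConvexOn_fSCAD_abs_add_sq {a lam1 lam2 : ℝ} (ha : 1 < a) (hlam1 : 0 < lam1)
    (hlam2 : 1 / (2 * (a - 1)) < lam2) :
    StrictConvexOn ℝ univ fun u => lam1 * fSCAD a lam1 |u| + lam2 * u ^ 2 := by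
  have h := (convexOn_fSCAD_abs_add_sq ha hlam1).add_strictConvexOn
    (strictConvexOn_const_mul_sq (sub_pos.mpr hlam2))
  refine h.congr fun u _ => ?_
  simp only [Pi.add_apply]
  ring

lemma StrictConvexOn.sum_comp_apply {ι 𝕜 E β : Type*} [Fintype ι]
    [Semiring 𝕜] [PartialOrder 𝕜] [AddCommMonoid E] [Module 𝕜 E] [AddCommMonoid β] [PartialOrder β]
    [IsOrderedCancelAddMonoid β] [Module 𝕜 β] {s : Set E} {g : E → β}
    (hg : StrictConvexOn 𝕜 s g) :
    StrictConvexOn 𝕜 (univ.pi fun _ => s) fun x : ι → E => ∑ i, g (x i) := by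
  refine ⟨convex_pi fun _ _ => hg.1, fun x hx y hy hxy a b ha hb hab => ?_⟩
  obtain ⟨i, hi⟩ := Function.ne_iff.mp hxy
  simp only [Finset.smul_sum, ← Finset.sum_add_distrib, Pi.add_apply, Pi.smul_apply]
  exact Finset.sum_lt_sum (fun j _ => hg.convexOn.2 (hx j trivial) (hy j trivial) ha.le hb.le hab)
    ⟨i, Finset.mem_univ i, hg.2 (hx i trivial) (hy i trivial) hi ha hb hab⟩

theorem scad_l2_coordinatewise_strictly_convex_general
    (a lam1 lam2 : ℝ) (ha : 2 < a) (hlam1 : 0 < lam1)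
    (hlam2 : 1 / (2 * (a - 1)) < lam2)
    (p : ℕ) :
    ∀ x y : Fin p → ℝ, x ≠ y → ∀ t : ℝ, 0 < t → t < 1 →
      (∑ j, (lam1 * fSCAD a lam1 |(t • x + (1 - t) • y) j|
          + lam2 * ((t • x + (1 - t) • y) j) ^ 2))
        < t * (∑ j, (lam1 * fSCAD a lam1 |x j| + lam2 * (x j) ^ 2))
          + (1 - t) * (∑ j, (lam1 * fSCAD a lam1 |y j| + lam2 * (y j) ^ 2)) := by
  intro x y hxy t ht0 ht1
  have h := (strictConvexOn_fSCAD_abs_add_sq (by linarith) hlam1 hlam2).sum_comp_apply (ι := Fin p)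
  exact h.2 (by simp) (by simp) hxy ht0 (sub_pos.mpr ht1) (add_sub_cancel t 1)

/-- Strict convexity of the coordinatewise SCAD_L2 penalty on ℝ^p. -/
theorem scad_l2_coordinatewise_strictly_convex
    (a lam1 lam2 : ℝ) (ha : 2 < a) (hlam1 : 0 < lam1)
    (hlam2 : 1 / (2 * (a - 1)) < lam2)
    (p : ℕ) (hp : 1 ≤ p) :
    ∀ x y : Fin p → ℝ, x ≠ y → ∀ t : ℝ, 0 < t → t < 1 →
      (∑ j, (lam1 * fSCAD a lam1 |(t • x + (1 - t) • y) j|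
          + lam2 * ((t • x + (1 - t) • y) j) ^ 2))
        < t * (∑ j, (lam1 * fSCAD a lam1 |x j| + lam2 * (x j) ^ 2))
          + (1 - t) * (∑ j, (lam1 * fSCAD a lam1 |y j| + lam2 * (y j) ^ 2)) :=
  scad_l2_coordinatewise_strictly_convex_general a lam1 lam2 ha hlam1 hlam2 p
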